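/- arXiv:0908.0840 — 5 statements merged into one kernel-verified Lean document; each statement's English description precedes it below -/
import Mathlib

section
/- Suppose 0 < μ_- < μ_+ and σ_+ > 0, and let h₀ > 0, h₁ = 0. Then min over x ∈ [μ_-, μ_+] of h₀²x²/(2μ_M x - μ_-μ_+ + σ_+²) equals h₀²μ_-²/(μ_-² + σ_+²) if μ_+μ_- - 2σ_+² ≤ μ_-², and equals h₀²(μ_+μ_- - σ_+²)/μ_M² if μ_-² < μ_+μ_- - 2σ_+², where μ_M = (μ_+ + μ_-)/2. -/
/-!
Write the denominator as `a x - b` with `a = 2 μ_M` and `b = μ_+ μ_- - σ_+²`. Since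
`a² x² - 4 b (a x - b) = (a x - 2 b)²`, the function `x² / (a x - b)` is bounded below by
`4 b / a² = b / μ_M²`, with equality at `x = 2 b / a`, and it increases for `x ≥ 2 b / a`.
The two cases of the theorem are whether this critical point lies left of `μ_-` or inside
`[μ_-, μ_+]`.
-/

open Set

lemma sq_div_le_sq_div_of_le {a b x y : ℝ} (ha : 0 ≤ a) (hy₀ : 0 ≤ y) (hy : 0 < a * y - b)
    (hcrit : 2 * b ≤ a * y) (hyx : y ≤ x) :
    y ^ 2 / (a * y - b) ≤ x ^ 2 / (a * x - b) := by
  have hx : 0 < a * x - b := by linarith [mul_le_mul_of_nonneg_left hyx ha]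
  rw [div_le_div_iff₀ hy hx]
  have hcross : 0 ≤ a * x * y - b * (x + y) := by nlinarith [mul_le_mul_of_nonneg_right hyx hy.le]
  calc y ^ 2 * (a * x - b) ≤ y ^ 2 * (a * x - b) + (x - y) * (a * x * y - b * (x + y)) :=
        le_add_of_nonneg_right (mul_nonneg (sub_nonneg.2 hyx) hcross)
    _ = x ^ 2 * (a * y - b) := by ring

lemma four_mul_div_sq_le_sq_div {a b x : ℝ} (ha : a ≠ 0) (hx : 0 < a * x - b) :
    4 * b / a ^ 2 ≤ x ^ 2 / (a * x - b) := by
  rw [div_le_div_iff₀ (by positivity) hx]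
  nlinarith [sq_nonneg (a * x - 2 * b)]

lemma sq_div_at_critical {a b : ℝ} (ha : a ≠ 0) (hb : b ≠ 0) :
    (2 * b / a) ^ 2 / (a * (2 * b / a) - b) = 4 * b / a ^ 2 := by
  field_simp
  ring

lemma isLeast_image_sq_div_of_critical_le {a b m M : ℝ} (ha : 0 ≤ a) (hm₀ : 0 ≤ m)
    (hm : 0 < a * m - b) (hcrit : 2 * b ≤ a * m) (hmM : m ≤ M) :
    IsLeast ((fun x ↦ x ^ 2 / (a * x - b)) '' Icc m M) (m ^ 2 / (a * m - b)) :=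
  ⟨⟨m, ⟨le_rfl, hmM⟩, rfl⟩, by
    rintro _ ⟨x, ⟨hmx, -⟩, rfl⟩
    exact sq_div_le_sq_div_of_le ha hm₀ hm hcrit hmx⟩

lemma isLeast_image_sq_div_of_critical_mem {a b m M : ℝ} (ha : 0 < a) (hm : 0 < a * m - b)
    (hcrit : a * m ≤ 2 * b) (hcritM : 2 * b ≤ a * M) :
    IsLeast ((fun x ↦ x ^ 2 / (a * x - b)) '' Icc m M) (4 * b / a ^ 2) := by
  have hb : 0 < b := by linarith
  refine ⟨⟨2 * b / a, ⟨?_, ?_⟩, sq_div_at_critical ha.ne' hb.ne'⟩, ?_⟩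
  · rw [le_div_iff₀ ha]; linarith
  · rw [div_le_iff₀ ha]; linarith
  · rintro _ ⟨x, ⟨hmx, -⟩, rfl⟩
    exact four_mul_div_sq_le_sq_div ha.ne' (by nlinarith)

lemma IsLeast.image_const_mul {α : Type*} {g : α → ℝ} {s : Set α} {v k : ℝ}
    (h : IsLeast (g '' s) v) (hk : 0 ≤ k) :
    IsLeast ((fun x ↦ k * g x) '' s) (k * v) := by
  simpa only [image_image] using (monotone_mul_left_of_nonneg hk).map_isLeast h

theorem stmt_9_general (μm μp σp h₀ : ℝ) (h1 : 0 < μm) (h2 : μm < μp)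
    (μM : ℝ) (hμM : μM = (μp + μm)/2)
    (f : ℝ → ℝ) (hf : ∀ x, f x = h₀^2*x^2/(2*μM*x - μm*μp + σp^2)) :
    (μp*μm - 2*σp^2 ≤ μm^2 → IsLeast (f '' Set.Icc μm μp) (h₀^2*μm^2/(μm^2 + σp^2))) ∧
    (μm^2 < μp*μm - 2*σp^2 → IsLeast (f '' Set.Icc μm μp) (h₀^2*(μp*μm - σp^2)/μM^2)) := by
  subst hμM
  have hf' : f = fun x ↦ h₀ ^ 2 * (x ^ 2 / ((μp + μm) * x - (μm * μp - σp ^ 2))) := by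
    funext x
    rw [hf, mul_div_assoc]
    ring_nf
  have hm : 0 < (μp + μm) * μm - (μm * μp - σp ^ 2) := by nlinarith
  rw [hf']
  constructor
  · intro hc
    convert (isLeast_image_sq_div_of_critical_le (by linarith) h1.le hm (by linarith)
      h2.le).image_const_mul (sq_nonneg h₀) using 1
    rw [mul_div_assoc]
    ring_nf
  · intro hc
    convert (isLeast_image_sq_div_of_critical_mem (M := μp) (by linarith) hm (by linarith)
      (by nlinarith [sq_nonneg σp])).image_const_mul (sq_nonneg h₀) using 1
    field_simp
    ring

theorem stmt_9 (μm μp σp h₀ : ℝ) (h1 : 0 < μm) (h2 : μm < μp) (h3 : 0 < σp) (h4 : 0 < h₀)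
    (μM : ℝ) (hμM : μM = (μp + μm)/2)
    (f : ℝ → ℝ) (hf : ∀ x, f x = h₀^2*x^2/(2*μM*x - μm*μp + σp^2)) :
    (μp*μm - 2*σp^2 ≤ μm^2 → IsLeast (f '' Set.Icc μm μp) (h₀^2*μm^2/(μm^2 + σp^2))) ∧
    (μm^2 < μp*μm - 2*σp^2 → IsLeast (f '' Set.Icc μm μp) (h₀^2*(μp*μm - σp^2)/μM^2)) :=
  stmt_9_general μm μp σp h₀ h1 h2 μM hμM f hf
end

section
/- Let f₁(π) = (h₀ - πμ₁)² + (h₁ - πσ₁)² and f₂(π) = (h₀ - πμ₂)² + (h₁ - πσ₂)², with μ₁² + σ₁² > 0 and μ₂² + σ₂² > 0. If (h₀μ₁ + h₁σ₁)(h₀μ₂ + h₁σ₂) ≤ 0, then min over π ∈ ℝ of max(f₁(π), f₂(π)) equals h₀² + h₁², attained at π = 0. -/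
/-! Moving from `π = 0` changes `(h₀ - πμ)² + (h₁ - πσ)²` by `π²(μ² + σ²) - 2π(h₀μ + h₁σ)`, which is
nonnegative as soon as `π` and `h₀μ + h₁σ` have opposite signs. Since the two inner products
`h₀μᵢ + h₁σᵢ` have opposite signs, every `π` has opposite sign to one of them, so one of `f₁ π`, `f₂ π`
is at least `f₁ 0 = f₂ 0 = h₀² + h₁²`. -/

variable {R : Type*} [CommRing R] [LinearOrder R] [IsStrictOrderedRing R]

lemma mul_nonpos_or_mul_nonpos_of_mul_nonpos {a b : R} (hab : a * b ≤ 0) (t : R) :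
    t * a ≤ 0 ∨ t * b ≤ 0 := by
  have : (t * a) * (t * b) ≤ 0 := by
    rw [show (t * a) * (t * b) = t ^ 2 * (a * b) by ring]
    exact mul_nonpos_of_nonneg_of_nonpos (sq_nonneg t) hab
  rcases mul_nonpos_iff.mp this with ⟨-, h⟩ | ⟨h, -⟩
  · exact Or.inr h
  · exact Or.inl h

lemma sq_add_sq_le_of_mul_inner_nonpos {h₀ h₁ μ σ t : R} (ht : t * (h₀ * μ + h₁ * σ) ≤ 0) :
    h₀ ^ 2 + h₁ ^ 2 ≤ (h₀ - t * μ) ^ 2 + (h₁ - t * σ) ^ 2 := by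
  nlinarith [sq_nonneg (t * μ), sq_nonneg (t * σ)]

theorem stmt_12_general (h₀ h₁ μ₁ μ₂ σ₁ σ₂ : ℝ)
    (hsign : (h₀*μ₁ + h₁*σ₁)*(h₀*μ₂ + h₁*σ₂) ≤ 0)
    (f₁ f₂ : ℝ → ℝ)
    (hf₁ : ∀ π, f₁ π = (h₀ - π*μ₁)^2 + (h₁ - π*σ₁)^2)
    (hf₂ : ∀ π, f₂ π = (h₀ - π*μ₂)^2 + (h₁ - π*σ₂)^2) :
    (∀ π : ℝ, max (f₁ 0) (f₂ 0) ≤ max (f₁ π) (f₂ π)) ∧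
    max (f₁ 0) (f₂ 0) = h₀^2 + h₁^2 := by
  have hzero : max (f₁ 0) (f₂ 0) = h₀^2 + h₁^2 := by simp [hf₁, hf₂]
  refine ⟨fun π => ?_, hzero⟩
  rw [hzero, hf₁, hf₂]
  rcases mul_nonpos_or_mul_nonpos_of_mul_nonpos hsign π with h | h
  · exact le_max_of_le_left (sq_add_sq_le_of_mul_inner_nonpos h)
  · exact le_max_of_le_right (sq_add_sq_le_of_mul_inner_nonpos h)

theorem stmt_12 (h₀ h₁ μ₁ μ₂ σ₁ σ₂ : ℝ)
    (hp1 : 0 < μ₁^2 + σ₁^2) (hp2 : 0 < μ₂^2 + σ₂^2)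
    (hsign : (h₀*μ₁ + h₁*σ₁)*(h₀*μ₂ + h₁*σ₂) ≤ 0)
    (f₁ f₂ : ℝ → ℝ)
    (hf₁ : ∀ π, f₁ π = (h₀ - π*μ₁)^2 + (h₁ - π*σ₁)^2)
    (hf₂ : ∀ π, f₂ π = (h₀ - π*μ₂)^2 + (h₁ - π*σ₂)^2) :
    (∀ π : ℝ, max (f₁ 0) (f₂ 0) ≤ max (f₁ π) (f₂ π)) ∧
    max (f₁ 0) (f₂ 0) = h₀^2 + h₁^2 :=
  stmt_12_general h₀ h₁ μ₁ μ₂ σ₁ σ₂ hsign f₁ f₂ hf₁ hf₂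
end

section
/- Let f₁, f₂, π₀, π₁, π₂ be as in the two-parabola setting with μ₁² + σ₁² < μ₂² + σ₂². If π₁ ≤ π₀ ≤ π₂ or π₂ ≤ π₀ ≤ π₁, then min over π ∈ ℝ of max(f₁(π), f₂(π)) is attained at π₀, with value h₀² + h₁² - (h₀μ₁ + h₁σ₁)²/(μ₁² + σ₁²) + (μ₁² + σ₁²)(π₀ - π₁)². -/
/-!
Write `Aᵢ = μᵢ² + σᵢ²` and `Bᵢ = h₀μᵢ + h₁σᵢ`. Completing the square, `fᵢ` is the upward parabola
`h₀² + h₁² - Bᵢ²/Aᵢ + Aᵢ(π - πᵢ)²` with vertex `πᵢ`, and `f₁ - f₂ = π(2(B₂ - B₁) - (A₂ - A₁)π)`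
vanishes at `π₀`. If `π₁ ≤ π₀ ≤ π₂`, then `f₁` increases to the right of `π₀` and `f₂` increases
to the left of it, so moving away from the crossing point `π₀` in either direction increases
one of the two functions, hence their maximum; the other ordering is symmetric.
-/

open Set

lemma max_le_max_of_eq_of_monotoneOn_of_antitoneOn {α β : Type*} [LinearOrder α] [LinearOrder β]
    {f g : α → β} {x₀ : α} (hfg : f x₀ = g x₀) (hf : MonotoneOn f (Ici x₀))
    (hg : AntitoneOn g (Iic x₀)) (x : α) :
    max (f x₀) (g x₀) ≤ max (f x) (g x) := by
  rw [← hfg, max_self]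
  rcases le_total x₀ x with hx | hx
  · exact (hf self_mem_Ici hx hx).trans (le_max_left _ _)
  · exact hfg ▸ (hg hx self_mem_Iic hx).trans (le_max_right _ _)

lemma monotoneOn_add_mul_sq_sub {A : ℝ} (hA : 0 ≤ A) (c p : ℝ) :
    MonotoneOn (fun x => c + A * (x - p) ^ 2) (Ici p) := fun _ hx _ _ hxy => by
  have := pow_le_pow_left₀ (sub_nonneg.2 hx) (sub_le_sub_right hxy p) 2
  dsimp only
  gcongr

lemma antitoneOn_add_mul_sq_sub {A : ℝ} (hA : 0 ≤ A) (c p : ℝ) :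
    AntitoneOn (fun x => c + A * (x - p) ^ 2) (Iic p) := fun _ _ _ hy hxy => by
  have := pow_le_pow_left₀ (sub_nonneg.2 hy) (sub_le_sub_left hxy p) 2
  dsimp only
  rw [← neg_sub p, ← neg_sub p, neg_sq, neg_sq]
  gcongr

lemma sub_mul_sq_add_sub_mul_sq_eq_vertex (h₀ h₁ μ σ π : ℝ) (hA : μ ^ 2 + σ ^ 2 ≠ 0) :
    (h₀ - π * μ) ^ 2 + (h₁ - π * σ) ^ 2 =
      h₀ ^ 2 + h₁ ^ 2 - (h₀ * μ + h₁ * σ) ^ 2 / (μ ^ 2 + σ ^ 2) +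
        (μ ^ 2 + σ ^ 2) * (π - (h₀ * μ + h₁ * σ) / (μ ^ 2 + σ ^ 2)) ^ 2 := by
  field_simp
  ring

lemma sub_mul_sq_add_sub_mul_sq_eq_of_crossing {h₀ h₁ μ₁ μ₂ σ₁ σ₂ π₀ : ℝ}
    (hπ₀ : π₀ * (μ₂ ^ 2 - μ₁ ^ 2 + σ₂ ^ 2 - σ₁ ^ 2) = 2 * (h₀ * (μ₂ - μ₁) + h₁ * (σ₂ - σ₁))) :
    (h₀ - π₀ * μ₁) ^ 2 + (h₁ - π₀ * σ₁) ^ 2 = (h₀ - π₀ * μ₂) ^ 2 + (h₁ - π₀ * σ₂) ^ 2 := by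
  linear_combination (-π₀) * hπ₀

theorem stmt_14 (h₀ h₁ μ₁ μ₂ σ₁ σ₂ : ℝ)
    (hp1 : 0 < μ₁^2 + σ₁^2) (hlt : μ₁^2 + σ₁^2 < μ₂^2 + σ₂^2)
    (f₁ f₂ : ℝ → ℝ)
    (hf₁ : ∀ π, f₁ π = (h₀ - π*μ₁)^2 + (h₁ - π*σ₁)^2)
    (hf₂ : ∀ π, f₂ π = (h₀ - π*μ₂)^2 + (h₁ - π*σ₂)^2)
    (π₀ π₁ π₂ : ℝ)
    (hπ₁ : π₁ = (h₀*μ₁ + h₁*σ₁)/(μ₁^2 + σ₁^2))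
    (hπ₂ : π₂ = (h₀*μ₂ + h₁*σ₂)/(μ₂^2 + σ₂^2))
    (hπ₀ : π₀ = 2*(h₀*(μ₂ - μ₁) + h₁*(σ₂ - σ₁))/(μ₂^2 - μ₁^2 + σ₂^2 - σ₁^2))
    (hbetween : (π₁ ≤ π₀ ∧ π₀ ≤ π₂) ∨ (π₂ ≤ π₀ ∧ π₀ ≤ π₁)) :
    (∀ π : ℝ, max (f₁ π₀) (f₂ π₀) ≤ max (f₁ π) (f₂ π)) ∧
    max (f₁ π₀) (f₂ π₀) =
      h₀^2 + h₁^2 - (h₀*μ₁ + h₁*σ₁)^2/(μ₁^2 + σ₁^2) + (μ₁^2 + σ₁^2)*(π₀ - π₁)^2 := by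
  have hf₁v : f₁ = fun π => h₀^2 + h₁^2 - (h₀*μ₁ + h₁*σ₁)^2/(μ₁^2 + σ₁^2) +
      (μ₁^2 + σ₁^2) * (π - π₁)^2 := by
    ext π; rw [hf₁, hπ₁, sub_mul_sq_add_sub_mul_sq_eq_vertex _ _ _ _ _ hp1.ne']
  have hf₂v : f₂ = fun π => h₀^2 + h₁^2 - (h₀*μ₂ + h₁*σ₂)^2/(μ₂^2 + σ₂^2) +
      (μ₂^2 + σ₂^2) * (π - π₂)^2 := by
    ext π; rw [hf₂, hπ₂, sub_mul_sq_add_sub_mul_sq_eq_vertex _ _ _ _ _ (hp1.trans hlt).ne']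
  have hcross : f₁ π₀ = f₂ π₀ := by
    rw [hf₁, hf₂]
    exact sub_mul_sq_add_sub_mul_sq_eq_of_crossing (hπ₀ ▸ div_mul_cancel₀ _ (by linarith))
  have hmono₁ := hf₁v ▸ monotoneOn_add_mul_sq_sub hp1.le _ π₁
  have hanti₁ := hf₁v ▸ antitoneOn_add_mul_sq_sub hp1.le _ π₁
  have hmono₂ := hf₂v ▸ monotoneOn_add_mul_sq_sub (hp1.trans hlt).le _ π₂
  have hanti₂ := hf₂v ▸ antitoneOn_add_mul_sq_sub (hp1.trans hlt).le _ π₂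
  refine ⟨fun π => ?_, by rw [← hcross, max_self, hf₁v]⟩
  rcases hbetween with ⟨h₁₀, h₀₂⟩ | ⟨h₂₀, h₀₁⟩
  · exact max_le_max_of_eq_of_monotoneOn_of_antitoneOn hcross
      (hmono₁.mono (Ici_subset_Ici.2 h₁₀)) (hanti₂.mono (Iic_subset_Iic.2 h₀₂)) π
  · rw [max_comm (f₁ π₀), max_comm (f₁ π)]
    exact max_le_max_of_eq_of_monotoneOn_of_antitoneOn hcross.symm
      (hmono₂.mono (Ici_subset_Ici.2 h₂₀)) (hanti₁.mono (Iic_subset_Iic.2 h₀₁)) π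
end

section
/- Suppose there exists (x̄, ȳ) ∈ D = [μ_-, μ_+] × [σ_-, σ_+] with h₀x̄ + h₁ȳ = 0 and x̄² + ȳ² > 0. Then min over π ∈ ℝ of max over (μ,σ) ∈ D of ((h₀ - πμ)² + (h₁ - πσ)²) equals h₀² + h₁², and the minimum is attained at π* = 0. -/
/-! At `π = 0` the objective is the constant `h₀² + h₁²`. For any other `π`, evaluating at the
point `(x̄, ȳ) ∈ D` orthogonal to `(h₀, h₁)` gives
`(h₀ - π x̄)² + (h₁ - π ȳ)² = h₀² + h₁² + π² (x̄² + ȳ²) ≥ h₀² + h₁²`, so the maximum over `D` is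
at least the value at `π = 0`. -/

lemma sq_add_sq_le_sub_mul_sq_add_sub_mul_sq {h₀ h₁ x y : ℝ} (h : h₀ * x + h₁ * y = 0) (π : ℝ) :
    h₀ ^ 2 + h₁ ^ 2 ≤ (h₀ - π * x) ^ 2 + (h₁ - π * y) ^ 2 :=
  calc h₀ ^ 2 + h₁ ^ 2 ≤ h₀ ^ 2 + h₁ ^ 2 + π ^ 2 * (x ^ 2 + y ^ 2) := by
        have : 0 ≤ π ^ 2 * (x ^ 2 + y ^ 2) := by positivity
        linarith
    _ = (h₀ - π * x) ^ 2 + (h₁ - π * y) ^ 2 + 2 * π * (h₀ * x + h₁ * y) := by ring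
    _ = (h₀ - π * x) ^ 2 + (h₁ - π * y) ^ 2 := by rw [h]; ring

lemma csSup_image_eq_of_eqOn_const {α : Type*} {s : Set α} (hs : s.Nonempty) {f : α → ℝ} {c : ℝ}
    (hf : Set.EqOn f (fun _ => c) s) : sSup (f '' s) = c := by
  rw [Set.image_congr hf, hs.image_const, csSup_singleton]

theorem stmt_17_general (h₀ h₁ μm μp σm σp : ℝ)
    (xb yb : ℝ) (hmem : (xb, yb) ∈ Set.Icc μm μp ×ˢ Set.Icc σm σp)
    (hline : h₀*xb + h₁*yb = 0)
    (G : ℝ → ℝ)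
    (hG : ∀ π, G π = sSup ((fun p : ℝ × ℝ => (h₀ - π*p.1)^2 + (h₁ - π*p.2)^2) ''
      (Set.Icc μm μp ×ˢ Set.Icc σm σp))) :
    (∀ π : ℝ, G 0 ≤ G π) ∧ G 0 = h₀^2 + h₁^2 := by
  have hG0 : G 0 = h₀^2 + h₁^2 := by
    rw [hG 0]
    exact csSup_image_eq_of_eqOn_const ⟨_, hmem⟩ fun p _ => by ring
  refine ⟨fun π => ?_, hG0⟩
  have hbdd : BddAbove ((fun p : ℝ × ℝ => (h₀ - π*p.1)^2 + (h₁ - π*p.2)^2) ''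
      (Set.Icc μm μp ×ˢ Set.Icc σm σp)) :=
    (isCompact_Icc.prod isCompact_Icc).bddAbove_image (by fun_prop)
  rw [hG0, hG π]
  exact (sq_add_sq_le_sub_mul_sq_add_sub_mul_sq hline π).trans
    (le_csSup hbdd ⟨(xb, yb), hmem, rfl⟩)

theorem stmt_17 (h₀ h₁ μm μp σm σp : ℝ) (hμ : μm ≤ μp) (hσ : σm ≤ σp)
    (xb yb : ℝ) (hmem : (xb, yb) ∈ Set.Icc μm μp ×ˢ Set.Icc σm σp)
    (hline : h₀*xb + h₁*yb = 0) (hpos : 0 < xb^2 + yb^2)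
    (G : ℝ → ℝ)
    (hG : ∀ π, G π = sSup ((fun p : ℝ × ℝ => (h₀ - π*p.1)^2 + (h₁ - π*p.2)^2) ''
      (Set.Icc μm μp ×ˢ Set.Icc σm σp))) :
    (∀ π : ℝ, G 0 ≤ G π) ∧ G 0 = h₀^2 + h₁^2 :=
  stmt_17_general h₀ h₁ μm μp σm σp xb yb hmem hline G hG
end

section
/- Suppose 0 < μ_- < μ_+, σ_+ > 0, h₁ = 0, h₀ > 0, and μ_-² < μ_+μ_- - 2σ_+². Then with ν* the two-point measure on {(μ_-, σ_+), (μ_+, σ_+)} assigning mass t to (μ_+, σ_+) where t = (μ_-μ_+ - μ_-² - 2σ_+²)/(μ_+² - μ_-²), the optimal hedge is π* = h₀/μ_M with μ_M = (μ_+ + μ_-)/2; i.e., (∫ h₀μ dν*)/(∫ (μ² + σ²) dν*) = h₀/μ_M. -/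
open MeasureTheory

/-
With the given weight `t`, the second moment of `ν*` is `μ_-μ_+ - σ_+²`, while its mean is
`μ_- + t (μ_+ - μ_-) = 2 (μ_-μ_+ - σ_+²) / (μ_+ + μ_-)`: the two agree up to the factor
`2 / (μ_+ + μ_-) = 1 / μ_M`, so the ratio is `h₀ / μ_M`. The hypothesis `μ_-² < μ_+μ_- - 2σ_+²`
makes `t` a probability weight and the second moment positive.
-/

theorem integral_smul_dirac_add_smul_dirac {α E : Type*} [MeasurableSpace α]
    [MeasurableSingletonClass α] [NormedAddCommGroup E] [NormedSpace ℝ E] [CompleteSpace E]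
    (f : α → E) (a b : α) {s u : ℝ} (hs : 0 ≤ s) (hu : 0 ≤ u) :
    ∫ x, f x ∂(ENNReal.ofReal s • Measure.dirac a + ENNReal.ofReal u • Measure.dirac b)
      = s • f a + u • f b := by
  rw [integral_add_measure ((integrable_dirac enorm_lt_top).smul_measure ENNReal.ofReal_ne_top)
      ((integrable_dirac enorm_lt_top).smul_measure ENNReal.ofReal_ne_top),
    integral_smul_measure, integral_smul_measure, integral_dirac, integral_dirac,
    ENNReal.toReal_ofReal hs, ENNReal.toReal_ofReal hu]

section TwoPoint

variable {μm μp σp : ℝ}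

theorem sq_sub_sq_pos_of_sq_lt (h : μm ^ 2 < μp * μm - 2 * σp ^ 2) : 0 < μp ^ 2 - μm ^ 2 := by
  nlinarith [sq_nonneg (μp - μm), sq_nonneg σp]

theorem two_point_weight_nonneg (h : μm ^ 2 < μp * μm - 2 * σp ^ 2) :
    0 ≤ (μm * μp - μm ^ 2 - 2 * σp ^ 2) / (μp ^ 2 - μm ^ 2) :=
  div_nonneg (by linarith) (sq_sub_sq_pos_of_sq_lt h).le

theorem two_point_weight_le_one (h : μm ^ 2 < μp * μm - 2 * σp ^ 2) :
    (μm * μp - μm ^ 2 - 2 * σp ^ 2) / (μp ^ 2 - μm ^ 2) ≤ 1 := by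
  rw [div_le_one (sq_sub_sq_pos_of_sq_lt h)]
  nlinarith [sq_nonneg (μp - μm), sq_nonneg σp]

theorem two_point_second_moment (h : μm ^ 2 < μp * μm - 2 * σp ^ 2) {t : ℝ}
    (ht : t = (μm * μp - μm ^ 2 - 2 * σp ^ 2) / (μp ^ 2 - μm ^ 2)) :
    (1 - t) * (μm ^ 2 + σp ^ 2) + t * (μp ^ 2 + σp ^ 2) = μm * μp - σp ^ 2 := by
  have hd := (sq_sub_sq_pos_of_sq_lt h).ne'
  subst ht
  field_simp
  ring

theorem two_point_mean (h : μm ^ 2 < μp * μm - 2 * σp ^ 2) {t : ℝ}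
    (ht : t = (μm * μp - μm ^ 2 - 2 * σp ^ 2) / (μp ^ 2 - μm ^ 2)) :
    (1 - t) * μm + t * μp = (μm * μp - σp ^ 2) / ((μp + μm) / 2) := by
  have hd := (sq_sub_sq_pos_of_sq_lt h).ne'
  have hs : μp + μm ≠ 0 := fun hs => hd (by linear_combination (μp - μm) * hs)
  subst ht
  field_simp
  ring

end TwoPoint

theorem stmt_18_general (μm μp σp h₀ : ℝ) (h5 : μm^2 < μp*μm - 2*σp^2)
    (t : ℝ) (ht : t = (μm*μp - μm^2 - 2*σp^2)/(μp^2 - μm^2))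
    (ν : Measure (ℝ × ℝ))
    (hν : ν = ENNReal.ofReal (1 - t) • Measure.dirac (μm, σp)
             + ENNReal.ofReal t • Measure.dirac (μp, σp))
    (μM : ℝ) (hμM : μM = (μp + μm)/2) :
    (∫ p, h₀*p.1 ∂ν) / (∫ p, (p.1^2 + p.2^2) ∂ν) = h₀/μM := by
  have ht0 : 0 ≤ t := ht ▸ two_point_weight_nonneg h5
  have ht1 : 0 ≤ 1 - t := sub_nonneg.2 (ht ▸ two_point_weight_le_one h5)
  have hmoment : μm * μp - σp ^ 2 ≠ 0 := by nlinarith [sq_nonneg μm, sq_nonneg σp]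
  simp only [hν, integral_smul_dirac_add_smul_dirac _ _ _ ht1 ht0, smul_eq_mul]
  calc _ = h₀ * ((1 - t) * μm + t * μp) / (μm * μp - σp ^ 2) := by
        rw [two_point_second_moment h5 ht]; ring
    _ = h₀ / μM := by
        rw [two_point_mean h5 ht, ← hμM, mul_div_assoc, div_div_cancel_left' hmoment,
          div_eq_mul_inv]

theorem stmt_18 (μm μp σp h₀ : ℝ) (h1 : 0 < μm) (h2 : μm < μp) (h3 : 0 < σp)
    (h4 : 0 < h₀) (h5 : μm^2 < μp*μm - 2*σp^2)
    (t : ℝ) (ht : t = (μm*μp - μm^2 - 2*σp^2)/(μp^2 - μm^2))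
    (ν : Measure (ℝ × ℝ))
    (hν : ν = ENNReal.ofReal (1 - t) • Measure.dirac (μm, σp)
             + ENNReal.ofReal t • Measure.dirac (μp, σp))
    (μM : ℝ) (hμM : μM = (μp + μm)/2) :
    (∫ p, h₀*p.1 ∂ν) / (∫ p, (p.1^2 + p.2^2) ∂ν) = h₀/μM :=
  stmt_18_general μm μp σp h₀ h5 t ht ν hν μM hμM
end
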